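/- arXiv:1709.01200 — 2 statements merged into one kernel-verified Lean document; each statement's English description precedes it below -/
import Mathlib

section
/- For every integer e ≥ 0, the coefficient of λ^{2e} in M_1 := Z_1 · Z_0⁻¹ equals Σ_{k=0}^{e} (−1)^k · Σ over all (k+1)-tuples (μ_1,…,μ_{k+1}) of positive integers with μ_1 + ⋯ + μ_{k+1} = e+1 of the product Π_{j=1}^{k+1} (2μ_j − 1)!!, and all odd-degree coefficients of M_1 vanish. -/
open PowerSeries Finset Finset.Nat
open PowerSeries Finset Finset.Nat

/-- Double factorial with `dfact 0 = 1`; by natural subtraction, `dfact (2*k - 1)`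
is `(2k-1)!!` with the convention `(-1)!! = 1` at `k = 0`. -/
def dfact : ℕ → ℕ
  | 0 => 1
  | 1 => 1
  | n + 2 => (n + 2) * dfact n

/-- `Zser j ∈ ℚ[[λ]]` has coefficient of `λ^(2k)` equal to `(2k+j)!·(2k-1)!!/(2k)!`
and vanishing odd-degree coefficients. -/
noncomputable def Zser (j : ℕ) : PowerSeries ℚ :=
  PowerSeries.mk fun n => if n % 2 = 0 then
    (Nat.factorial (n + j) : ℚ) * (dfact (n - 1) : ℚ) / (Nat.factorial n : ℚ) else 0

/-- The generating function of one-rooted maps, `M₁ = Z₁/Z₀`. -/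
noncomputable def M1 : PowerSeries ℚ := Zser 1 * (Zser 0)⁻¹

lemma dfact_succ' (m : ℕ) : dfact (m + 1) = (m + 1) * dfact (m - 1) := by
  cases m with
  | zero => simp [dfact]
  | succ m => rfl

lemma coeff_Z0 (m : ℕ) :
    PowerSeries.coeff m (Zser 0) = if m % 2 = 0 then (dfact (m - 1) : ℚ) else 0 := by
  simp only [Zser, coeff_mk, Nat.add_zero]
  split_ifs with h
  · rw [mul_comm, mul_div_assoc, div_self (by exact_mod_cast m.factorial_ne_zero), mul_one]
  · rfl

lemma coeff_Z1 (m : ℕ) :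
    PowerSeries.coeff m (Zser 1) = if m % 2 = 0 then (dfact (m + 1) : ℚ) else 0 := by
  simp only [Zser, coeff_mk]
  split_ifs with h
  · rw [Nat.factorial_succ, dfact_succ']
    push_cast
    field_simp
  · rfl

lemma constC_Z0 : constantCoeff (Zser 0) = 1 := by
  have := coeff_Z0 0
  simpa [dfact] using this

lemma Z0_eq : Zser 0 = 1 + X ^ 2 * Zser 1 := by
  ext n
  rw [map_add, coeff_Z0, coeff_X_pow_mul']
  rcases n with _ | _ | n
  · simp [dfact]
  · simp
  · have h2 : (2:ℕ) ≤ n + 2 := by omega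
    rw [if_pos h2, coeff_Z1]
    have hn : n + 2 - 2 = n := by omega
    rw [hn]
    have : PowerSeries.coeff (n+2) (1 : PowerSeries ℚ) = 0 := by
      simp [PowerSeries.coeff_one]
    rw [this, zero_add]
    have hpar : (n + 2) % 2 = n % 2 := by omega
    rw [hpar]
    split_ifs with h
    · norm_cast
    · rfl

lemma sum_AT_succ {M : Type*} [AddCommMonoid M] (k n : ℕ) (f : (Fin (k+1) → ℕ) → M) :
    ∑ μ ∈ antidiagonalTuple (k+1) n, f μ
      = ∑ p ∈ Finset.HasAntidiagonal.antidiagonal n, ∑ ν ∈ antidiagonalTuple k p.2, f (Fin.cons p.1 ν) := by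
  rw [Finset.sum_sigma']
  refine Finset.sum_nbij'
    (fun (μ : Fin (k+1) → ℕ) =>
      (⟨(μ 0, ∑ i : Fin k, μ i.succ), fun i : Fin k => μ i.succ⟩ : (_ : ℕ × ℕ) × (Fin k → ℕ)))
    (fun x => Fin.cons x.1.1 x.2) ?_ ?_ ?_ ?_ ?_
  · intro μ hμ
    rw [mem_antidiagonalTuple] at hμ
    rw [Finset.mem_sigma, Finset.HasAntidiagonal.mem_antidiagonal]
    constructor
    · rw [← hμ, Fin.sum_univ_succ]
    · rw [mem_antidiagonalTuple]
  · rintro ⟨⟨a, b⟩, ν⟩ hx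
    rw [Finset.mem_sigma, Finset.HasAntidiagonal.mem_antidiagonal, mem_antidiagonalTuple] at hx
    rw [mem_antidiagonalTuple, Fin.sum_univ_succ]
    simp only [Fin.cons_zero, Fin.cons_succ]
    rw [hx.2, hx.1]
  · intro μ hμ
    funext i
    cases i using Fin.cases <;> simp
  · rintro ⟨⟨a, b⟩, ν⟩ hx
    rw [Finset.mem_sigma, Finset.HasAntidiagonal.mem_antidiagonal, mem_antidiagonalTuple] at hx
    simp only [Fin.cons_zero, Fin.cons_succ]
    exact Sigma.ext (by simp [hx.2]) (by simp)
  · intro μ hμ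
    congr 1
    funext i
    cases i using Fin.cases <;> simp

lemma coeff_pow_tuple (φ : PowerSeries ℚ) (k n : ℕ) :
    PowerSeries.coeff n (φ ^ k)
      = ∑ μ ∈ antidiagonalTuple k n, ∏ j, PowerSeries.coeff (μ j) φ := by
  induction k generalizing n with
  | zero =>
    cases n with
    | zero => simp
    | succ n => simp [PowerSeries.coeff_one]
  | succ k ih =>
    rw [pow_succ', PowerSeries.coeff_mul, sum_AT_succ]
    refine Finset.sum_congr rfl fun p hp => ?_
    rw [ih, Finset.mul_sum]
    refine Finset.sum_congr rfl fun ν hν => ?_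
    rw [Fin.prod_univ_succ]
    simp

lemma geom (e : ℕ) :
    (∑ k ∈ Finset.range (e+1), PowerSeries.C ((-1:ℚ)^k) * (X^2 * Zser 1)^(k+1))
        * (1 + X^2 * Zser 1)
      = X^2 * Zser 1 + PowerSeries.C ((-1:ℚ)^e) * (X^2 * Zser 1)^(e+2) := by
  induction e with
  | zero => simp; ring
  | succ e ih =>
    rw [Finset.sum_range_succ, pow_succ (-1:ℚ) e, map_mul, map_neg, map_one]
    linear_combination ih

lemma Z0_inv : Zser 0 * (Zser 0)⁻¹ = 1 :=
  PowerSeries.mul_inv_cancel _ (by rw [constC_Z0]; norm_num)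

lemma M1_mul_Z0 : M1 * Zser 0 = Zser 1 := by
  have h := Z0_inv
  unfold M1
  linear_combination Zser 1 * h

lemma M1_rec : M1 = Zser 1 - X^2 * (M1 * Zser 1) := by
  have h := M1_mul_Z0
  rw [Z0_eq] at h
  linear_combination h

lemma M1_odd : ∀ n : ℕ, Odd n → PowerSeries.coeff n M1 = 0 := by
  intro n
  induction n using Nat.strong_induction_on with
  | _ n ih =>
    intro hn
    rw [M1_rec, map_sub, coeff_Z1, if_neg (by simp [Nat.odd_iff.mp hn]), coeff_X_pow_mul']
    split_ifs with h2
    · rw [zero_sub, neg_eq_zero, PowerSeries.coeff_mul]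
      refine Finset.sum_eq_zero fun p hp => ?_
      rw [Finset.HasAntidiagonal.mem_antidiagonal] at hp
      rcases Nat.even_or_odd p.2 with he | ho
      · have hodd1 : Odd p.1 := by
          rcases hn with ⟨m, hm⟩; rcases he with ⟨l, hl⟩
          refine ⟨m - l - 1, by omega⟩
        rw [ih p.1 (by omega) hodd1, zero_mul]
      · rw [coeff_Z1, if_neg (by rcases ho with ⟨l, hl⟩; omega), mul_zero]
    · simp

lemma key_k (e k : ℕ) (hk : k ≤ e) :
    PowerSeries.coeff (2*(e-k)) ((Zser 1)^(k+1))
      = ∑ μ ∈ (antidiagonalTuple (k+1) (e+1)).filter (fun μ => ∀ j, 0 < μ j),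
          ∏ j, (dfact (2 * μ j - 1) : ℚ) := by
  rw [coeff_pow_tuple]
  rw [← Finset.sum_filter_of_ne (p := fun ν : Fin (k+1) → ℕ => ∀ j, ν j % 2 = 0)
    (by
      intro ν _ hne j
      by_contra hodd
      exact hne (Finset.prod_eq_zero (Finset.mem_univ j)
        (by rw [coeff_Z1, if_neg hodd])))]
  have hc : ∑ _j : Fin (k+1), 2 = 2 * (k+1) := by
    simp [Finset.sum_const, mul_comm]
  refine Finset.sum_nbij' (fun ν => fun j => ν j / 2 + 1) (fun μ => fun j => 2 * μ j - 2)
    ?_ ?_ ?_ ?_ ?_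
  · intro ν hν
    simp only [Finset.mem_filter, mem_antidiagonalTuple] at hν ⊢
    obtain ⟨hsum, hpar⟩ := hν
    have h2 : 2 * ∑ j, (ν j / 2 + 1) = 2*(e-k) + 2*(k+1) := by
      calc 2 * ∑ j, (ν j / 2 + 1) = ∑ j, 2 * (ν j / 2 + 1) := by rw [Finset.mul_sum]
      _ = ∑ j, (ν j + 2) := Finset.sum_congr rfl fun j _ => by have := hpar j; omega
      _ = (∑ j, ν j) + ∑ _j : Fin (k+1), (2:ℕ) := Finset.sum_add_distrib
      _ = 2*(e-k) + 2*(k+1) := by rw [hsum, hc]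
    exact ⟨by omega, fun j => by omega⟩
  · intro μ hμ
    simp only [Finset.mem_filter, mem_antidiagonalTuple] at hμ ⊢
    obtain ⟨hsum, hpos⟩ := hμ
    have h2 : (∑ j, (2 * μ j - 2)) + 2*(k+1) = 2*(e+1) := by
      calc (∑ j, (2 * μ j - 2)) + 2*(k+1)
          = (∑ j, (2 * μ j - 2)) + ∑ _j : Fin (k+1), (2:ℕ) := by rw [hc]
      _ = ∑ j, ((2 * μ j - 2) + 2) := Finset.sum_add_distrib.symm
      _ = ∑ j, 2 * μ j := Finset.sum_congr rfl fun j _ => by have := hpos j; omega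
      _ = 2 * ∑ j, μ j := by rw [Finset.mul_sum]
      _ = 2*(e+1) := by rw [hsum]
    exact ⟨by omega, fun j => by omega⟩
  · intro ν hν
    simp only [Finset.mem_filter, mem_antidiagonalTuple] at hν
    funext j
    beta_reduce
    have := hν.2 j
    omega
  · intro μ hμ
    simp only [Finset.mem_filter, mem_antidiagonalTuple] at hμ
    funext j
    beta_reduce
    have := hμ.2 j
    omega
  · intro ν hν
    simp only [Finset.mem_filter, mem_antidiagonalTuple] at hν
    refine Finset.prod_congr rfl fun j _ => ?_
    beta_reduce
    rw [coeff_Z1, if_pos (hν.2 j)]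
    have := hν.2 j
    rw [show 2 * (ν j / 2 + 1) - 1 = ν j + 1 from by omega]

theorem coeff_M1_eq' (e : ℕ) : PowerSeries.coeff (2 * e) M1
      = ∑ k ∈ Finset.range (e + 1), (-1 : ℚ) ^ k *
          ∑ μ ∈ (Finset.Nat.antidiagonalTuple (k + 1) (e + 1)).filter
              (fun μ => ∀ j, 0 < μ j),
            ∏ j : Fin (k + 1), (dfact (2 * μ j - 1) : ℚ) := by
  set P : PowerSeries ℚ :=
    ∑ k ∈ Finset.range (e+1), PowerSeries.C ((-1:ℚ)^k) * (X^2 * Zser 1)^(k+1) with hPdef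
  have hg := geom e
  rw [← Z0_eq] at hg
  have hPformula : P = (X^2 * Zser 1 + PowerSeries.C ((-1:ℚ)^e) * (X^2 * Zser 1)^(e+2))
      * (Zser 0)⁻¹ := by
    calc P = P * (Zser 0 * (Zser 0)⁻¹) := by rw [Z0_inv, mul_one]
    _ = (P * Zser 0) * (Zser 0)⁻¹ := by ring
    _ = _ := by rw [hg]
  have hzero : PowerSeries.coeff (2*e+2) ((X^2 * Zser 1)^(e+2) * (Zser 0)⁻¹) = 0 := by
    have hW : (X^2 * Zser 1)^(e+2) * (Zser 0)⁻¹
        = X^(2*(e+2)) * ((Zser 1)^(e+2) * (Zser 0)⁻¹) := by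
      rw [mul_pow, ← pow_mul]; ring
    rw [hW, coeff_X_pow_mul', if_neg (by omega)]
  have hPc : PowerSeries.coeff (2*e+2) P = PowerSeries.coeff (2*e) M1 := by
    rw [hPformula, add_mul, map_add, mul_assoc (PowerSeries.C ((-1:ℚ)^e)), coeff_C_mul,
      hzero, mul_zero, add_zero]
    rw [show X^2 * Zser 1 * (Zser 0)⁻¹ = X^2 * M1 from by unfold M1; ring]
    rw [coeff_X_pow_mul]
  rw [← hPc, hPdef, map_sum]
  refine Finset.sum_congr rfl fun k hk => ?_
  rw [Finset.mem_range] at hk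
  rw [coeff_C_mul]
  congr 1
  have hW : (X^2 * Zser 1)^(k+1) = X^(2*(k+1)) * (Zser 1)^(k+1) := by
    rw [mul_pow, ← pow_mul]
  rw [hW, coeff_X_pow_mul', if_pos (by omega)]
  rw [show 2*e+2 - 2*(k+1) = 2*(e-k) from by omega]
  exact key_k e k (by omega)

/-- The coefficient of `λ^(2e)` in `M₁` is
`Σ_{k=0}^{e} (−1)^k Σ_{μ₁+⋯+μ_{k+1}=e+1, μᵢ>0} Π_j (2μ_j − 1)!!`,
and all odd-degree coefficients of `M₁` vanish. -/
theorem coeff_M1_eq :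
    (∀ e : ℕ, PowerSeries.coeff (2 * e) M1
      = ∑ k ∈ Finset.range (e + 1), (-1 : ℚ) ^ k *
          ∑ μ ∈ (Finset.Nat.antidiagonalTuple (k + 1) (e + 1)).filter
              (fun μ => ∀ j, 0 < μ j),
            ∏ j : Fin (k + 1), (dfact (2 * μ j - 1) : ℚ))
    ∧ (∀ n : ℕ, Odd n → PowerSeries.coeff n M1 = 0) :=
  ⟨coeff_M1_eq', M1_odd⟩
end

section
/- For every integer n ≥ 0, the identity λ^n·D^n(Z_0) = Σ_{k=0}^{n} (−1)^{n−k}·B_{n,2k−1}·R_{2k−1} holds in ℚ[[λ]], where D^n denotes the n-fold formal derivative. -/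
open PowerSeries Finset

/-- For an odd integer `i ≥ -1`, `Rser i ∈ ℚ[[λ]]` has coefficient of `λ^(2k)` equal to
`(2k+i)!!` (the truncation `Int.toNat` realizes the convention `(-1)!! = 1`) and
vanishing odd-degree coefficients. -/
noncomputable def Rser (i : ℤ) : PowerSeries ℚ :=
  PowerSeries.mk fun n => if n % 2 = 0 then (dfact ((n + i).toNat) : ℚ) else 0

lemma coeff_Rser (i : ℤ) (n : ℕ) :
    coeff n (Rser i) = if n % 2 = 0 then (dfact ((n + i).toNat) : ℚ) else 0 :=
  coeff_mk _ _

lemma derivFun_sum (s : Finset ℕ) (f : ℕ → PowerSeries ℚ) :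
    derivativeFun (∑ k ∈ s, f k) = ∑ k ∈ s, derivativeFun (f k) :=
  map_sum (PowerSeries.derivative ℚ).toLinearMap f s

lemma derivFun_X : derivativeFun (X : PowerSeries ℚ) = 1 := derivative_X

lemma coeff_derivFun' (f : PowerSeries ℚ) (n : ℕ) :
    coeff n (derivativeFun f) = coeff (n + 1) f * (n + 1) := coeff_derivative f n

lemma XDXpow (n : ℕ) :
    (X : PowerSeries ℚ) * derivativeFun (X ^ n) = (n : ℚ) • (X : PowerSeries ℚ) ^ n := by
  induction n with
  | zero => simp [pow_zero, derivativeFun_one]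
  | succ n ih =>
    calc (X : PowerSeries ℚ) * derivativeFun (X ^ (n+1))
        = X * derivativeFun (X ^ n * X) := by rw [pow_succ]
      _ = X * (X ^ n • derivativeFun X + X • derivativeFun (X ^ n)) := by
          rw [derivativeFun_mul]
      _ = X ^ (n+1) + X * (X * derivativeFun (X ^ n)) := by
          rw [derivFun_X, smul_eq_mul, smul_eq_mul, mul_one, mul_add, ← pow_succ']
      _ = X ^ (n+1) + (n:ℚ) • X ^ (n+1) := by rw [ih, mul_smul_comm, ← pow_succ']
      _ = ((n:ℚ)+1) • X ^ (n+1) := by rw [add_smul, one_smul, add_comm]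
      _ = ((n+1:ℕ) : ℚ) • X ^ (n+1) := by norm_cast
    
lemma dfact_cast (k : ℕ) : (dfact (2*k+1) : ℚ) = (2*k+1 : ℚ) * dfact ((2*(k:ℤ)-1).toNat) := by
  rcases k with _ | k
  · norm_num [dfact]; rw [show (-1:ℤ).toNat = 0 from rfl]; simp [dfact]
  · have h : (2*(((k+1:ℕ)):ℤ)-1).toNat = 2*k+1 := by push_cast; omega
    have h2 : 2*(k+1)+1 = (2*k+1)+2 := by ring
    rw [h, h2, dfact]; push_cast; ring

lemma key (k : ℕ) :
    (X : PowerSeries ℚ) * derivativeFun (Rser (2 * (k : ℤ) - 1))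
      = Rser (2 * ((k : ℤ) + 1) - 1) - ((2 * k + 1 : ℚ)) • Rser (2 * (k : ℤ) - 1) := by
  ext n
  rw [map_sub, coeff_smul, smul_eq_mul]
  rcases n with _ | n
  · rw [coeff_zero_X_mul, coeff_Rser, coeff_Rser]
    rw [if_pos (by norm_num), if_pos (by norm_num)]
    have h1 : (((0:ℕ):ℤ) + (2*((k:ℤ)+1)-1)).toNat = 2*k+1 := by omega
    have h2 : (((0:ℕ):ℤ) + (2*(k:ℤ)-1)) = 2*(k:ℤ)-1 := by omega
    rw [h1, h2, dfact_cast k]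
    ring
  · rw [coeff_succ_X_mul, coeff_derivFun', coeff_Rser, coeff_Rser]
    rcases Nat.even_or_odd (n+1) with he | ho
    · obtain ⟨m, hm⟩ := he
      have hm1 : 1 ≤ m := by omega
      have h1 : (((n+1 : ℕ):ℤ) + (2 * (k:ℤ) - 1)).toNat = 2*(m+k-1)+1 := by omega
      have h2 : (((n+1 : ℕ):ℤ) + (2 * ((k:ℤ)+1) - 1)).toNat = 2*(m+k-1)+1+2 := by omega
      rw [if_pos (by omega), if_pos (by omega), h1, h2]
      have hd : (dfact (2*(m+k-1)+1+2) : ℚ) = ((2*(m+k-1)+1+2 : ℕ) : ℚ) * dfact (2*(m+k-1)+1) := by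
        rw [dfact]; push_cast; ring
      rw [hd]
      have ha : ((m + k - 1 : ℕ) : ℚ) = (m:ℚ) + k - 1 := by
        have h : (m + k - 1 : ℕ) + 1 = m + k := by omega
        have := congrArg (fun x : ℕ => (x:ℚ)) h
        push_cast at this; linarith
      have hn : ((n:ℚ) + 1) = 2 * m := by
        have := congrArg (fun x : ℕ => (x:ℚ)) hm
        push_cast at this; linarith
      push_cast
      linear_combination (dfact (2*(m+k-1)+1) : ℚ) * hn - 2 * (dfact (2*(m+k-1)+1) : ℚ) * ha
    · rw [Nat.odd_iff] at ho
      rw [if_neg (by omega), if_neg (by omega)]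
      ring
/-- `Bcoef n k` represents `B_{n, 2k−1}`: determined by `B_{0,−1} = 1` and the recursion
`B_{n+1,2k−1} = B_{n,2k−3} + (2k+n+1)·B_{n,2k−1}`, with the conventions
`B_{n,−3} = 0` and `B_{n,2n+1} = 0`. -/
def Bcoef : ℕ → ℕ → ℚ
  | 0, 0 => 1
  | 0, _ + 1 => 0
  | n + 1, 0 => (n + 1 : ℚ) * Bcoef n 0
  | n + 1, k + 1 => Bcoef n k + (2 * (k + 1) + n + 1 : ℚ) * Bcoef n (k + 1)

lemma Bcoef_eq_zero : ∀ n k : ℕ, n < k → Bcoef n k = 0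
  | 0, _ + 1, _ => rfl
  | n + 1, k + 1, h => by
      rw [show Bcoef (n+1) (k+1) = Bcoef n k + (2 * (k + 1) + n + 1 : ℚ) * Bcoef n (k+1) from rfl,
        Bcoef_eq_zero n k (by omega), Bcoef_eq_zero n (k+1) (by omega)]
      ring

lemma coef_rec (n k : ℕ) (hk : k ≤ n) :
    ((-1:ℚ))^(n-k) * Bcoef n k - ((2*(k+1)+1+n : ℚ)) * ((-1:ℚ)^(n-(k+1)) * Bcoef n (k+1))
      = (-1:ℚ)^(n-k) * Bcoef (n+1) (k+1) := by
  rw [show Bcoef (n+1) (k+1) = Bcoef n k + (2 * (k + 1) + n + 1 : ℚ) * Bcoef n (k+1) from rfl]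
  rcases eq_or_lt_of_le hk with rfl | h
  · rw [Bcoef_eq_zero k (k+1) (by omega)]; ring
  · have hs : n - k = (n-(k+1)) + 1 := by omega
    rw [hs, pow_succ]; ring

/-- For every `n ≥ 0`,
`λ^n·D^n(Z₀) = Σ_{k=0}^{n} (−1)^{n−k}·B_{n,2k−1}·R_{2k−1}` in `ℚ[[λ]]`,
where `Z₀ = R₋₁`. -/
theorem pow_mul_iterated_deriv_Z0 (n : ℕ) :
    (X : PowerSeries ℚ) ^ n * PowerSeries.derivativeFun^[n] (Rser (-1))
      = ∑ k ∈ Finset.range (n + 1),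
          ((-1 : ℚ) ^ (n - k) * Bcoef n k) • Rser (2 * (k : ℤ) - 1) := by
  induction n with
  | zero =>
    simp only [pow_zero, Function.iterate_zero, id_eq, one_mul, Finset.sum_range_one]
    norm_num [show Bcoef 0 0 = 1 from rfl]
  | succ n ih =>
    have step : (X : PowerSeries ℚ)^(n+1) * derivativeFun^[n+1] (Rser (-1))
        = X * derivativeFun ((X : PowerSeries ℚ)^n * derivativeFun^[n] (Rser (-1)))
          - (n:ℚ) • ((X : PowerSeries ℚ)^n * derivativeFun^[n] (Rser (-1))) := by
      rw [Function.iterate_succ_apply', derivativeFun_mul, smul_eq_mul, smul_eq_mul, mul_add,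
        mul_left_comm X (derivativeFun^[n] (Rser (-1))) (derivativeFun (X^n)),
        XDXpow, mul_smul_comm, mul_comm (derivativeFun^[n] (Rser (-1))) ((X:PowerSeries ℚ)^n),
        ← mul_assoc, ← pow_succ']
      exact (add_sub_cancel_right _ _).symm
    rw [step, ih, derivFun_sum, Finset.mul_sum, Finset.smul_sum]
    have hterm : ∀ k ∈ Finset.range (n+1),
        (X : PowerSeries ℚ) * derivativeFun (((-1:ℚ)^(n-k) * Bcoef n k) • Rser (2*(k:ℤ)-1))
        = ((-1:ℚ)^(n-k) * Bcoef n k) • Rser (2*((k:ℤ)+1)-1)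
          - ((2*(k:ℚ)+1+n) * ((-1:ℚ)^(n-k) * Bcoef n k)) • Rser (2*(k:ℤ)-1)
          + (n:ℚ) • (((-1:ℚ)^(n-k) * Bcoef n k) • Rser (2*(k:ℤ)-1)) := by
      intro k _
      rw [derivativeFun_smul, mul_smul_comm, key k]
      module
    rw [Finset.sum_congr rfl hterm, Finset.sum_add_distrib, Finset.sum_sub_distrib,
      add_sub_cancel_right]
    have h1 : ∑ x ∈ Finset.range (n+1),
          ((2*(x:ℚ)+1+n) * ((-1:ℚ)^(n-x) * Bcoef n x)) • Rser (2*(x:ℤ)-1)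
        = ∑ x ∈ Finset.range (n+2),
          ((2*(x:ℚ)+1+n) * ((-1:ℚ)^(n-x) * Bcoef n x)) • Rser (2*(x:ℤ)-1) := by
      rw [eq_comm, Finset.sum_range_succ, Bcoef_eq_zero n (n+1) (by omega)]
      simp
    rw [h1,
      Finset.sum_range_succ'
        (fun x => ((2*(x:ℚ)+1+n) * ((-1:ℚ)^(n-x) * Bcoef n x)) • Rser (2*(x:ℤ)-1)) (n+1),
      Finset.sum_range_succ'
        (fun k => ((-1:ℚ)^(n+1-k) * Bcoef (n+1) k) • Rser (2*(k:ℤ)-1)) (n+1),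
      sub_add_eq_sub_sub]
    have hAB : ∑ x ∈ Finset.range (n+1), ((-1:ℚ)^(n-x) * Bcoef n x) • Rser (2*((x:ℤ)+1)-1)
          - ∑ x ∈ Finset.range (n+1),
              ((2*((x+1:ℕ):ℚ)+1+n) * ((-1:ℚ)^(n-(x+1)) * Bcoef n (x+1))) • Rser (2*((x+1:ℕ):ℤ)-1)
        = ∑ x ∈ Finset.range (n+1),
            ((-1:ℚ)^(n+1-(x+1)) * Bcoef (n+1) (x+1)) • Rser (2*((x+1:ℕ):ℤ)-1) := by
      rw [← Finset.sum_sub_distrib]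
      refine Finset.sum_congr rfl fun x hx => ?_
      have hx' : x ≤ n := by
        have := Finset.mem_range.mp hx; omega
      push_cast [Nat.succ_sub_succ]
      rw [← sub_smul]
      congr 1
      linear_combination coef_rec n x hx'
    rw [hAB, sub_eq_add_neg]
    congr 1
    rw [← neg_smul]
    congr 1
    rw [show Bcoef (n+1) 0 = ((n:ℚ)+1) * Bcoef n 0 from rfl]
    push_cast [pow_succ, Nat.sub_zero]
    ring
end
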